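/- arXiv:1604.06474 — 5 statements merged into one kernel-verified Lean document; each statement's English description precedes it below -/
import Mathlib

section
/- If k ≤ n/2 then λ_1 := 2·∑_{i=1}^{k/2} cos(2πi/n) satisfies λ_1 ≥ c·k for an absolute constant c > 0 (for instance c = 1/2 suffices for all n large enough), i.e., the second-largest eigenvalue of the ring lattice adjacency matrix is of order k. -/
/-!
For `i ≤ k/2 ≤ n/4` the angle `2πi/n` lies in `[0, π/2]`, where `cos` lies above its chord
`x ↦ 1 - 2x/π`. Summing the chord bound `1 - 4i/n` over `i = 1, …, j` (Gauss) gives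
`j - 2j(j+1)/n`, which is at least `j/4` once `4j ≤ n` and `n ≥ 8`.
-/

open Real Finset

theorem sum_Icc_one_natCast_mul_two (j : ℕ) :
    (∑ i ∈ Icc 1 j, (i : ℝ)) * 2 = j * (j + 1) := by
  induction j with
  | zero => simp
  | succ j ih =>
    rw [sum_Icc_succ_top (by omega), add_mul, ih]
    push_cast
    ring

theorem one_sub_four_mul_div_le_cos {n i : ℕ} (hn : 0 < n) (hi : 4 * i ≤ n) :
    1 - 4 * i / n ≤ cos (2 * π * i / n) := by
  have hn' : (0 : ℝ) < n := by exact_mod_cast hn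
  have hi' : (4 * i : ℝ) ≤ n := by exact_mod_cast hi
  have hangle : 2 * π * i / n ≤ π / 2 := by
    rw [div_le_iff₀ hn']
    nlinarith [pi_pos]
  have hchord := one_sub_mul_le_cos (by positivity) hangle
  have hslope : 2 / π * (2 * π * i / n) = 4 * i / n := by
    field_simp [pi_ne_zero]
    ring
  rwa [hslope] at hchord

theorem sub_le_sum_Icc_cos {n j : ℕ} (hn : 0 < n) (hj : 4 * j ≤ n) :
    (j : ℝ) - 2 * j * (j + 1) / n ≤ ∑ i ∈ Icc 1 j, cos (2 * π * i / n) :=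
  calc (j : ℝ) - 2 * j * (j + 1) / n
      = ∑ i ∈ Icc 1 j, (1 - 4 * (i : ℝ) / n) := by
        rw [sum_sub_distrib, ← sum_div, ← mul_sum]
        have := sum_Icc_one_natCast_mul_two j
        simp only [sum_const, Nat.card_Icc, add_tsub_cancel_right, nsmul_eq_mul, mul_one]
        linear_combination (2 / (n : ℝ)) * this
    _ ≤ ∑ i ∈ Icc 1 j, cos (2 * π * i / n) :=
        sum_le_sum fun i hi => one_sub_four_mul_div_le_cos hn (by have := (mem_Icc.mp hi).2; omega)

theorem quarter_le_sum_Icc_cos {n j : ℕ} (hn : 8 ≤ n) (hj : 4 * j ≤ n) :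
    (j : ℝ) / 4 ≤ ∑ i ∈ Icc 1 j, cos (2 * π * i / n) := by
  refine le_trans ?_ (sub_le_sum_Icc_cos (by omega) hj)
  have hn' : (8 : ℝ) ≤ n := by exact_mod_cast hn
  have hj' : (4 * j : ℝ) ≤ n := by exact_mod_cast hj
  have hquad : 2 * (j : ℝ) * (j + 1) / n ≤ 3 * j / 4 := by
    rw [div_le_iff₀ (by linarith)]
    nlinarith [(Nat.cast_nonneg j : (0 : ℝ) ≤ j)]
  linarith

/-- If `k ≤ n/2` then `λ_1 = 2·∑_{i=1}^{k/2} cos(2πi/n)` satisfies `λ_1 ≥ c·k` for an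
absolute constant `c > 0`, for all `n` large enough: the second-largest eigenvalue of the
ring lattice adjacency matrix is of order `k`. -/
theorem ring_lattice_second_eigenvalue_order_k :
    ∃ c : ℝ, 0 < c ∧ ∃ N : ℕ, ∀ n k : ℕ, N ≤ n → 0 < k → Even k → 2 * k ≤ n →
      c * k ≤ 2 * ∑ i ∈ Finset.Icc 1 (k / 2), Real.cos (2 * π * i / n) := by
  refine ⟨1 / 4, by norm_num, 8, fun n k hn _ ⟨j, hk⟩ hkn => ?_⟩
  subst hk
  have hhalf : (j + j) / 2 = j := by omega
  rw [hhalf]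
  have hsum := quarter_le_sum_Icc_cos (j := j) hn (by omega)
  push_cast
  linarith
end

section
/- For even k with k ≤ n/2 and n large, the spectral gap λ_1 - λ_2 := 2·∑_{i=1}^{k/2}[cos(2πi/n) - cos(4πi/n)] satisfies λ_1 - λ_2 ≥ c·k³/n² for an absolute constant c > 0. -/
/-!
With `x = 2πi/n`, each summand is `cos x - cos 2x = 2 sin (3x/2) sin (x/2)`, and Jordan's
inequality `sin y ≥ 2y/π` on `[0, π/2]` bounds it below by `6x²/π² = 24 i²/n²` as long as
`x ≤ π/3`, which `i ≤ k/2 ≤ n/8` guarantees. Summing, `∑_{i ≤ m} i² ≥ m³/3` with `m = k/2`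
gives `λ_1 - λ_2 ≥ 16 m³/n² = 2 k³/n²`.
-/

open Real Finset

lemma mul_sq_le_cos_sub_cos_two_mul {x : ℝ} (hx₀ : 0 ≤ x) (hx : x ≤ π / 3) :
    6 / π ^ 2 * x ^ 2 ≤ cos x - cos (2 * x) := by
  have hπ := pi_pos
  have hprod : cos x - cos (2 * x) = 2 * (sin (3 * x / 2) * sin (x / 2)) := by
    rw [cos_sub_cos, show (x - 2 * x) / 2 = -(x / 2) by ring, sin_neg]
    ring_nf
  have hjordan₁ : 2 / π * (3 * x / 2) ≤ sin (3 * x / 2) := mul_le_sin (by positivity) (by linarith)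
  have hjordan₂ : 2 / π * (x / 2) ≤ sin (x / 2) := mul_le_sin (by positivity) (by linarith)
  calc 6 / π ^ 2 * x ^ 2 = 2 * ((2 / π * (3 * x / 2)) * (2 / π * (x / 2))) := by
        field_simp; ring
    _ ≤ 2 * (sin (3 * x / 2) * sin (x / 2)) := by
        gcongr
        exact (by positivity : (0 : ℝ) ≤ 2 / π * (3 * x / 2)).trans hjordan₁
    _ = cos x - cos (2 * x) := hprod.symm

lemma cube_div_three_le_sum_Icc_sq (m : ℕ) : (m : ℝ) ^ 3 / 3 ≤ ∑ i ∈ Icc 1 m, (i : ℝ) ^ 2 := by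
  induction m with
  | zero => simp
  | succ m ih =>
    rw [sum_Icc_succ_top (by omega)]
    push_cast
    nlinarith [(m.cast_nonneg : (0 : ℝ) ≤ m)]

lemma sq_div_sq_le_cos_sub_cos {n i : ℕ} (hi : 6 * i ≤ n) :
    24 * (i : ℝ) ^ 2 / n ^ 2 ≤ cos (2 * π * i / n) - cos (4 * π * i / n) := by
  have hπ := pi_pos
  have hiR : 6 * (i : ℝ) ≤ n := by exact_mod_cast hi
  have hx : 2 * π * i / n ≤ π / 3 :=
    div_le_of_le_mul₀ n.cast_nonneg (by positivity) (by nlinarith)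
  have hbound := mul_sq_le_cos_sub_cos_two_mul (by positivity) hx
  calc 24 * (i : ℝ) ^ 2 / n ^ 2 = 6 / π ^ 2 * (2 * π * i / n) ^ 2 := by
        field_simp; ring
    _ ≤ _ := by rwa [show 4 * π * i / n = 2 * (2 * π * i / n) by ring]

lemma cube_div_sq_le_sum_cos_sub_cos {n m : ℕ} (hm : 6 * m ≤ n) :
    8 * (m : ℝ) ^ 3 / n ^ 2 ≤ ∑ i ∈ Icc 1 m, (cos (2 * π * i / n) - cos (4 * π * i / n)) :=
  calc 8 * (m : ℝ) ^ 3 / n ^ 2 = 24 / n ^ 2 * ((m : ℝ) ^ 3 / 3) := by ring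
    _ ≤ 24 / n ^ 2 * ∑ i ∈ Icc 1 m, (i : ℝ) ^ 2 := by
        gcongr; exact cube_div_three_le_sum_Icc_sq m
    _ = ∑ i ∈ Icc 1 m, 24 * (i : ℝ) ^ 2 / n ^ 2 := by
        rw [mul_sum]; exact sum_congr rfl fun i _ ↦ by ring
    _ ≤ _ := sum_le_sum fun i hi ↦
        sq_div_sq_le_cos_sub_cos (by linarith [(mem_Icc.mp hi).2])

/-- For even `k` with `k ≤ n/4` and `n` large, the spectral gap
`λ_1 - λ_2 = 2·∑_{i=1}^{k/2} [cos(2πi/n) - cos(4πi/n)]` of the ring lattice circulant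
matrix satisfies `λ_1 - λ_2 ≥ c·k³/n²` for an absolute constant `c > 0`. -/
theorem ring_lattice_spectral_gap :
    ∃ c : ℝ, 0 < c ∧ ∃ N : ℕ, ∀ n k : ℕ, N ≤ n → 0 < k → Even k → 4 * k ≤ n →
      c * k ^ 3 / n ^ 2 ≤
        2 * ∑ i ∈ Finset.Icc 1 (k / 2),
          (Real.cos (2 * π * i / n) - Real.cos (4 * π * i / n)) := by
  refine ⟨2, two_pos, 0, fun n k _ _ hk hkn ↦ ?_⟩
  obtain ⟨m, rfl⟩ := hk
  have hm : (m + m) / 2 = m := by omega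
  rw [hm]
  calc (2 : ℝ) * ↑(m + m) ^ 3 / n ^ 2 = 2 * (8 * (m : ℝ) ^ 3 / n ^ 2) := by push_cast; ring
    _ ≤ _ := by gcongr; exact cube_div_sq_le_sum_cos_sub_cos (by omega)
end

section
/- With p = 1 - β(1 - βk/(n-1)), q = βk/(n-1), r = k/(n-1), and 0 < β < 1, k < n-1, the KL divergence between the Watts–Strogatz model WS(n,k,β) with a fixed permutation and the Erdős–Rényi model ER(n, k/(n-1)) satisfies KL ≤ C·n²·(1-β)² for a constant C depending only on a lower bound on β and an upper bound on k²/(n(n-1)). -/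
open Real

/-- KL divergence between two Bernoulli distributions with success probabilities `a`, `b`. -/
noncomputable def klBernoulli (a b : ℝ) : ℝ :=
  a * Real.log (a / b) + (1 - a) * Real.log ((1 - a) / (1 - b))

/-- The Bernoulli KL divergence is bounded by the chi-square divergence. -/
lemma kl_le_chi2 (a b : ℝ) (ha0 : 0 < a) (ha1 : a < 1) (hb0 : 0 < b) (hb1 : b < 1) :
    klBernoulli a b ≤ (a - b) ^ 2 / (b * (1 - b)) := by
  unfold klBernoulli
  have h1 : Real.log (a / b) ≤ a / b - 1 :=
    Real.log_le_sub_one_of_pos (by positivity)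
  have h2 : Real.log ((1 - a) / (1 - b)) ≤ (1 - a) / (1 - b) - 1 :=
    Real.log_le_sub_one_of_pos (by apply div_pos <;> linarith)
  have e : a * (a / b - 1) + (1 - a) * ((1 - a) / (1 - b) - 1) =
      (a - b) ^ 2 / (b * (1 - b)) := by
    have hb : b ≠ 0 := ne_of_gt hb0
    have hb' : (1 : ℝ) - b ≠ 0 := by intro h; linarith [h]
    field_simp
    ring
  have := mul_le_mul_of_nonneg_left h1 ha0.le
  have := mul_le_mul_of_nonneg_left h2 (by linarith : (0:ℝ) ≤ 1 - a)
  linarith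

set_option maxHeartbeats 1000000 in
/-- Main estimate, stated over the reals with `r = k/(n-1)`. -/
lemma aux_kl_bound (N r β : ℝ) (hN : 3 ≤ N) (hr0 : 0 < r) (hr34 : r ≤ 3 / 4)
    (hβ0 : 0 < β) (hβ1 : β < 1) :
    N * (r * (N - 1)) / 2 * klBernoulli (1 - β * (1 - β * r)) r +
      (N * (N - 1) / 2 - N * (r * (N - 1)) / 2) * klBernoulli (β * r) r ≤
    4 * N ^ 2 * (1 - β) ^ 2 := by
  have hm0 : (0 : ℝ) < N - 1 := by linarith
  have hN0 : (0 : ℝ) ≤ N := by linarith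
  have hr1 : r < 1 := by linarith
  have hβr0 : 0 < β * r := mul_pos hβ0 hr0
  have hβr1 : β * r < 1 := by nlinarith
  have hp0 : 0 < 1 - β * (1 - β * r) := by nlinarith
  have hp1 : 1 - β * (1 - β * r) < 1 := by nlinarith
  have hrr0 : (0 : ℝ) < r * (1 - r) := mul_pos hr0 (by linarith)
  have hD0 : (0 : ℝ) ≤ (1 - β) ^ 2 := sq_nonneg _
  have klp := kl_le_chi2 (1 - β * (1 - β * r)) r hp0 hp1 hr0 hr1
  have klq := kl_le_chi2 (β * r) r hβr0 hβr1 hr0 hr1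
  have hpr : (1 - β * (1 - β * r) - r) ^ 2 ≤ (1 - β) ^ 2 := by
    have e : 1 - β * (1 - β * r) - r = (1 - β) * (1 - r * (1 + β)) := by ring
    rw [e]
    have h1 : -1 ≤ 1 - r * (1 + β) := by nlinarith
    have h2 : 1 - r * (1 + β) ≤ 1 := by nlinarith
    have hx : (1 - r * (1 + β)) ^ 2 ≤ 1 := by nlinarith
    calc ((1 - β) * (1 - r * (1 + β))) ^ 2 = (1 - β) ^ 2 * (1 - r * (1 + β)) ^ 2 := by ring
      _ ≤ (1 - β) ^ 2 * 1 := mul_le_mul_of_nonneg_left hx hD0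
      _ = (1 - β) ^ 2 := by ring
  have hc1 : (0 : ℝ) ≤ N * (r * (N - 1)) / 2 := by
    have := mul_nonneg hN0 (mul_nonneg hr0.le hm0.le); linarith
  have hc2 : (0 : ℝ) ≤ N * (N - 1) / 2 - N * (r * (N - 1)) / 2 := by
    nlinarith [mul_nonneg (mul_nonneg hN0 hm0.le) (show (0:ℝ) ≤ 1 - r by linarith)]
  have t1 : N * (r * (N - 1)) / 2 * klBernoulli (1 - β * (1 - β * r)) r ≤
      2 * N * (N - 1) * (1 - β) ^ 2 := by
    have s1 := mul_le_mul_of_nonneg_left klp hc1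
    have s2 : N * (r * (N - 1)) / 2 * ((1 - β * (1 - β * r) - r) ^ 2 / (r * (1 - r))) ≤
        2 * N * (N - 1) * (1 - β) ^ 2 := by
      rw [← mul_div_assoc, div_le_iff₀ hrr0]
      nlinarith [mul_le_mul_of_nonneg_left hpr hc1,
        mul_nonneg (mul_nonneg (mul_nonneg (mul_nonneg hN0 hm0.le) hD0) hr0.le)
          (show (0:ℝ) ≤ 3 / 2 - 2 * r by linarith)]
    linarith
  have t2 : (N * (N - 1) / 2 - N * (r * (N - 1)) / 2) * klBernoulli (β * r) r ≤
      2 * N * (N - 1) * (1 - β) ^ 2 := by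
    have s1 := mul_le_mul_of_nonneg_left klq hc2
    have s2 : (N * (N - 1) / 2 - N * (r * (N - 1)) / 2) * ((β * r - r) ^ 2 / (r * (1 - r))) ≤
        2 * N * (N - 1) * (1 - β) ^ 2 := by
      rw [← mul_div_assoc, div_le_iff₀ hrr0]
      nlinarith [mul_nonneg (mul_nonneg (mul_nonneg (mul_nonneg (mul_nonneg hN0 hm0.le) hD0)
          hr0.le) (show (0:ℝ) ≤ 1 - r by linarith)) (show (0:ℝ) ≤ 2 - r / 2 by linarith)]
    linarith
  nlinarith [mul_nonneg hN0 hD0]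

/-- Under `β ≥ 1/2`, `k ≤ n/2`, `k < n-1`, the KL divergence between the Watts–Strogatz
model `WS(n,k,β)` with a fixed permutation and the Erdős–Rényi model `ER(n, k/(n-1))`
(product Bernoulli measures over the `n choose 2` edges, with the `nk/2` lattice edges
having probability `p = 1-β(1-βk/(n-1))` under WS and probability `q = βk/(n-1)`
elsewhere, and all edges having probability `r = k/(n-1)` under ER) satisfies
`KL ≤ C·n²·(1-β)²` for a constant `C`. -/
theorem klDiv_WS_ER_upper_bound :
    ∃ C : ℝ, 0 < C ∧ ∀ n k : ℕ, ∀ β : ℝ, 0 < β → β < 1 → (1 : ℝ) / 2 ≤ β →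
      0 < k → 2 * k ≤ n → k < n - 1 →
      (n * k / 2 : ℝ) * klBernoulli (1 - β * (1 - β * k / (n - 1))) (k / (n - 1)) +
          ((n * (n - 1) / 2 : ℝ) - n * k / 2) *
            klBernoulli (β * k / (n - 1)) (k / (n - 1)) ≤
        C * n ^ 2 * (1 - β) ^ 2 := by
  refine ⟨4, by norm_num, ?_⟩
  intro n k β hβ0 hβ1 hβh hk h2k hkn
  have hK : (1 : ℝ) ≤ (k : ℝ) := by exact_mod_cast hk
  have h2K : 2 * (k : ℝ) ≤ (n : ℝ) := by exact_mod_cast h2k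
  have hkn' : k + 2 ≤ n := by omega
  have hKN : (k : ℝ) + 2 ≤ (n : ℝ) := by exact_mod_cast hkn'
  have hN : (3 : ℝ) ≤ (n : ℝ) := by linarith
  have hm0 : (0 : ℝ) < (n : ℝ) - 1 := by linarith
  have hr0 : 0 < (k : ℝ) / ((n : ℝ) - 1) := div_pos (by linarith) hm0
  have hr34 : (k : ℝ) / ((n : ℝ) - 1) ≤ 3 / 4 := by
    rw [div_le_iff₀ hm0]; linarith
  have key := aux_kl_bound (n : ℝ) ((k : ℝ) / ((n : ℝ) - 1)) β hN hr0 hr34 hβ0 hβ1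
  have e1 : β * (k : ℝ) / ((n : ℝ) - 1) = β * ((k : ℝ) / ((n : ℝ) - 1)) :=
    mul_div_assoc β _ _
  have e2 : (n : ℝ) * ((k : ℝ) / ((n : ℝ) - 1) * ((n : ℝ) - 1)) = (n : ℝ) * (k : ℝ) := by
    rw [div_mul_cancel₀ _ (ne_of_gt hm0)]
  rw [e1, ← e2]
  linarith [key]
end

section
/- Let A be the adjacency matrix of ER(n, k/(n-1)). Then with probability at least 1 - 1/n, the maximum-likelihood statistic T_1(A) = max over permutation matrices P_π of ⟨P_π B P_π^T, A⟩ satisfies T_1(A) ≤ (k/(n-1))·nk + 2√((k/(n-1))·nk·log n!) + (2/3)·log n!. -/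
open MeasureTheory ProbabilityTheory Real

/-- Ring distance between two nodes on the cycle `Z/nZ`. -/
def ringDist (n : ℕ) (i j : Fin n) : ℕ :=
  min ((i.val + n - j.val) % n) ((j.val + n - i.val) % n)

/-- Adjacency matrix of the ring lattice on `n` nodes with neighborhood size `k`. -/
def ringLattice (n k : ℕ) : Matrix (Fin n) (Fin n) ℝ :=
  Matrix.of fun i j => if 1 ≤ ringDist n i j ∧ ringDist n i j ≤ k / 2 then 1 else 0

open Finset

/-!
Write `B_σ` for the ring lattice relabelled by `σ`. As `B_σ` and `A` are symmetric,
`⟨B_σ, A⟩ = 2 ∑_{e ∈ E_σ} A_e`, where `E_σ` is the set of edges of `B_σ` above the diagonal;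
since every row of the ring lattice has at most `k` ones, `|E_σ| ≤ nk/2`. So each statistic is
twice a sum of at most `nk/2` independent Bernoulli(`p`) variables, and Bernstein's inequality
with deviation parameter `log n!` bounds its tail by `1/n!`. The ring lattice is invariant under
rotations, so `B_σ` takes at most `(n-1)!` distinct values, and a union bound over them gives
failure probability at most `(n-1)!/n! = 1/n`.
-/

theorem Real.exp_sub_one_sub_le {x : ℝ} (hx : 0 ≤ x) (hx3 : x < 3) :
    exp x - 1 - x ≤ x ^ 2 / (2 * (1 - x / 3)) := by
  have hsum := Real.summable_pow_div_factorial x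
  have hr : x / 3 < 1 := by linarith
  have hgeom : HasSum (fun n : ℕ => x ^ 2 / 2 * (x / 3) ^ n) (x ^ 2 / 2 * (1 - x / 3)⁻¹) :=
    (hasSum_geometric_of_lt_one (by positivity) hr).mul_left _
  have htail : ∑' n : ℕ, x ^ (n + 2) / (n + 2).factorial ≤ x ^ 2 / 2 * (1 - x / 3)⁻¹ := by
    refine ((summable_nat_add_iff 2).2 hsum).tsum_le_of_sum_range_le fun m => ?_
    refine le_trans (sum_le_sum fun n _ => ?_) (sum_le_hasSum _ (fun _ _ => by positivity) hgeom)
    have hfac : (2 * 3 ^ n : ℝ) ≤ (n + 2).factorial := by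
      exact_mod_cast add_comm n 2 ▸ Nat.factorial_mul_pow_le_factorial (m := 2) (n := n)
    calc x ^ (n + 2) / (n + 2).factorial ≤ x ^ (n + 2) / (2 * 3 ^ n) := by gcongr
      _ = x ^ 2 / 2 * (x / 3) ^ n := by rw [div_pow]; ring
  rw [exp_eq_exp_ℝ, NormedSpace.exp_eq_tsum_div]
  dsimp only
  rw [← hsum.sum_add_tsum_nat_add 2]
  have h13 : 1 - x / 3 ≠ 0 := by linarith
  calc _ = ∑' n : ℕ, x ^ (n + 2) / (n + 2).factorial := by simp [sum_range_succ]; ring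
    _ ≤ _ := htail
    _ = _ := by field_simp

/-- The exponent `l = s / (1 + s / 3)` with `s = √(2L/v)` is Bernstein's choice. -/
theorem exists_bernstein_exponent {v L : ℝ} (hv : 0 < v) (hL : 0 ≤ L) :
    ∃ l, 0 ≤ l ∧ v * (exp l - 1) - l * (v + √(2 * v * L) + L / 3) ≤ -L := by
  set s := √(2 * L / v)
  have hs : 0 ≤ s := sqrt_nonneg _
  have hvs : v * s ^ 2 = 2 * L := by rw [sq_sqrt (by positivity)]; field_simp
  have hw : √(2 * v * L) = v * s := by
    rw [show 2 * v * L = (v * s) ^ 2 by linear_combination (-v) * hvs, sqrt_sq (by positivity)]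
  have hc : 0 < 1 + s / 3 := by positivity
  have hl3 : s / (1 + s / 3) < 3 := by rw [div_lt_iff₀ hc]; linarith
  refine ⟨s / (1 + s / 3), by positivity, ?_⟩
  have htaylor := exp_sub_one_sub_le (by positivity) hl3
  have hval : v * ((s / (1 + s / 3)) ^ 2 / (2 * (1 - s / (1 + s / 3) / 3)))
      - s / (1 + s / 3) * (v * s + L / 3) = -L := by
    field_simp
    linear_combination (-9 : ℝ) * hvs
  rw [hw]
  nlinarith [mul_le_mul_of_nonneg_left htaylor hv.le]

section Bernoulli

variable {Ω ι : Type*} [MeasurableSpace Ω] {μ : Measure Ω} [IsProbabilityMeasure μ] {p : ℝ}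

theorem mgf_eq_of_bernoulli {X : Ω → ℝ} (hX : Measurable X) (h01 : ∀ ω, X ω = 0 ∨ X ω = 1)
    (hp : 0 ≤ p) (hber : μ {ω | X ω = 1} = ENNReal.ofReal p) (t : ℝ) :
    mgf X μ t = 1 + p * (exp t - 1) := by
  have hind : X = {ω | X ω = 1}.indicator 1 := by
    ext ω; rcases h01 ω with h | h <;> simp [h]
  have hset : MeasurableSet {ω | X ω = 1} := hX (measurableSet_singleton 1)
  have hexp : (fun ω => exp (t * X ω)) = fun ω => 1 + (exp t - 1) * X ω := by
    ext ω; rcases h01 ω with h | h <;> simp [h]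
  have hint : Integrable X μ := hind ▸ (integrable_const 1).indicator hset
  rw [mgf, hexp, integral_add (integrable_const 1) (hint.const_mul _), integral_const_mul, hind,
    integral_indicator_one hset, measureReal_def, hber, ENNReal.toReal_ofReal hp]
  simp
  ring

theorem measure_sum_ge_le_of_bernoulli {X : ι → Ω → ℝ} (hmeas : ∀ i, Measurable (X i))
    (h01 : ∀ i ω, X i ω = 0 ∨ X i ω = 1) (hp : 0 ≤ p)
    (hber : ∀ i, μ {ω | X i ω = 1} = ENNReal.ofReal p) (hindep : iIndepFun X μ)
    {s : Finset ι} {v L : ℝ} (hv : 0 < v) (hL : 0 ≤ L) (hs : #s * p ≤ v) :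
    μ {ω | v + √(2 * v * L) + L / 3 ≤ ∑ i ∈ s, X i ω} ≤ ENNReal.ofReal (exp (-L)) := by
  obtain ⟨l, hl, hexponent⟩ := exists_bernstein_exponent hv hL
  have hmgf : mgf (∑ i ∈ s, X i) μ l ≤ exp (v * (exp l - 1)) := by
    rw [hindep.mgf_sum hmeas, prod_congr rfl fun i _ => mgf_eq_of_bernoulli (hmeas i) (h01 i) hp
      (hber i) l, prod_const]
    have hel : 0 ≤ exp l - 1 := by linarith [one_le_exp hl]
    calc (1 + p * (exp l - 1)) ^ #s ≤ exp (p * (exp l - 1)) ^ #s :=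
          pow_le_pow_left₀ (by positivity) (by linarith [add_one_le_exp (p * (exp l - 1))]) _
      _ = exp (#s * p * (exp l - 1)) := by rw [← exp_nat_mul]; ring_nf
      _ ≤ exp (v * (exp l - 1)) := exp_le_exp.2 (mul_le_mul_of_nonneg_right hs hel)
  have hint : Integrable (fun ω => exp (l * (∑ i ∈ s, X i) ω)) μ := by
    refine integrable_exp_mul_of_le l #s hl
      (Finset.aemeasurable_sum s fun i _ => (hmeas i).aemeasurable) (ae_of_all _ fun ω => ?_)
    rw [Finset.sum_apply]
    exact (sum_le_sum fun i _ => (h01 i ω).elim (·.le.trans zero_le_one) (·.le)).trans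
      (by simp)
  have hchernoff := measure_ge_le_exp_mul_mgf (v + √(2 * v * L) + L / 3) hl hint
  simp only [Finset.sum_apply] at hchernoff
  rw [ENNReal.le_ofReal_iff_toReal_le (measure_ne_top _ _) (exp_pos _).le]
  calc _ ≤ _ := hchernoff
    _ ≤ exp (-l * (v + √(2 * v * L) + L / 3)) * exp (v * (exp l - 1)) := by gcongr
    _ ≤ exp (-L) := by rw [← exp_add]; exact exp_le_exp.2 (by linarith)

theorem measure_biUnion_sum_ge_le_of_bernoulli {X : ι → Ω → ℝ} (hmeas : ∀ i, Measurable (X i))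
    (h01 : ∀ i ω, X i ω = 0 ∨ X i ω = 1) (hp : 0 ≤ p)
    (hber : ∀ i, μ {ω | X i ω = 1} = ENNReal.ofReal p) (hindep : iIndepFun X μ)
    {β : Type*} {T : Finset β} {s : β → Finset ι} {v L : ℝ} (hv : 0 < v) (hL : 0 ≤ L)
    (hs : ∀ b ∈ T, #(s b) * p ≤ v) :
    μ (⋃ b ∈ T, {ω | v + √(2 * v * L) + L / 3 ≤ ∑ i ∈ s b, X i ω}) ≤
      #T * ENNReal.ofReal (exp (-L)) :=
  (measure_biUnion_finset_le _ _).trans <| (sum_le_card_nsmul _ _ _ fun b hb =>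
    measure_sum_ge_le_of_bernoulli hmeas h01 hp hber hindep hv hL (hs b hb)).trans_eq
      (nsmul_eq_mul _ _)

end Bernoulli

section UpperSupport

variable {ι : Type*} [Fintype ι] [LinearOrder ι]

theorem Fintype.sum_sum_eq_two_mul_sum_lt {R : Type*} [NonAssocSemiring R] (f : ι → ι → R)
    (hf : ∀ i j, f i j = f j i) (hdiag : ∀ i, f i i = 0) :
    ∑ i, ∑ j, f i j = 2 * ∑ e : {q : ι × ι // q.1 < q.2}, f e.1.1 e.1.2 := by
  have hsplit : ∀ q : ι × ι, f q.1 q.2 =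
      (if q.1 < q.2 then f q.1 q.2 else 0) + (if q.2 < q.1 then f q.2 q.1 else 0) := by
    rintro ⟨i, j⟩
    rcases lt_trichotomy i j with h | rfl | h
    · simp [h, h.not_gt]
    · simp [hdiag]
    · simp [h, h.not_gt, hf i j]
  have hswap : ∑ q : ι × ι, (if q.2 < q.1 then f q.2 q.1 else 0) =
      ∑ q : ι × ι, (if q.1 < q.2 then f q.1 q.2 else 0) :=
    Fintype.sum_equiv (Equiv.prodComm ι ι) _ _ fun _ => rfl
  rw [← Fintype.sum_prod_type', Fintype.sum_congr _ _ hsplit, sum_add_distrib, hswap, ← two_mul,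
    ← sum_filter, sum_subtype (p := fun q : ι × ι => q.1 < q.2) _ (by simp)]

noncomputable def Matrix.upperSupport (M : Matrix ι ι ℝ) : Finset {q : ι × ι // q.1 < q.2} :=
  {e | M e.1.1 e.1.2 ≠ 0}

theorem Matrix.sum_mul_eq_two_mul_sum_upperSupport {M A : Matrix ι ι ℝ}
    (hM01 : ∀ i j, M i j = 0 ∨ M i j = 1) (hM : M.IsSymm) (hMdiag : ∀ i, M i i = 0)
    (hA : A.IsSymm) :
    ∑ i, ∑ j, M i j * A i j = 2 * ∑ e ∈ M.upperSupport, A e.1.1 e.1.2 := by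
  rw [Fintype.sum_sum_eq_two_mul_sum_lt (fun i j => M i j * A i j)
    (fun i j => by rw [hM.apply, hA.apply]) (by simp [hMdiag]), upperSupport, sum_filter]
  congr 1
  refine sum_congr rfl fun e _ => ?_
  rcases hM01 e.1.1 e.1.2 with h | h <;> simp [h]

end UpperSupport

section RingLattice

variable {n : ℕ}

theorem ringDist_eq_min_val_sub (i j : Fin n) : ringDist n i j = min (i - j).val (j - i).val := by
  simp only [ringDist, Fin.val_sub]
  congr 2 <;> omega

theorem ringDist_self (i : Fin n) : ringDist n i i = 0 := by simp [ringDist]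

theorem ringDist_comm (i j : Fin n) : ringDist n i j = ringDist n j i := min_comm _ _

theorem ringDist_add_right [NeZero n] (i j r : Fin n) :
    ringDist n (i + r) (j + r) = ringDist n i j := by
  simp [ringDist_eq_min_val_sub]

theorem card_filter_ringDist_le [NeZero n] (i : Fin n) (m : ℕ) :
    #{j | 1 ≤ ringDist n i j ∧ ringDist n i j ≤ m} ≤ 2 * m := by
  set T : Finset (Fin n) := {t | 1 ≤ t.val ∧ t.val ≤ m}
  have hT : #T ≤ m := by
    simpa using card_le_card_of_injOn Fin.val (t := Icc 1 m)
      (fun t ht => by simpa [T] using ht) Fin.val_injective.injOn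
  have hsub : ({j | 1 ≤ ringDist n i j ∧ ringDist n i j ≤ m} : Finset (Fin n)) ⊆
      T.image (i + ·) ∪ T.image (i - ·) := by
    intro j hj
    simp only [mem_filter, mem_univ, true_and, ringDist_eq_min_val_sub] at hj
    rcases min_choice (i - j).val (j - i).val with h | h <;> rw [h] at hj
    · exact mem_union_right _ (mem_image.2 ⟨i - j, by simpa [T] using hj, sub_sub_cancel i j⟩)
    · exact mem_union_left _ (mem_image.2 ⟨j - i, by simpa [T] using hj, add_sub_cancel i j⟩)
  calc _ ≤ _ := card_le_card hsub
    _ ≤ #(T.image (i + ·)) + #(T.image (i - ·)) := card_union_le _ _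
    _ ≤ #T + #T := add_le_add card_image_le card_image_le
    _ ≤ 2 * m := by omega

variable {k : ℕ}

theorem ringLattice_apply_eq_zero_or_one (i j : Fin n) :
    ringLattice n k i j = 0 ∨ ringLattice n k i j = 1 := by
  simp only [ringLattice, Matrix.of_apply]; split_ifs <;> simp

theorem ringLattice_isSymm : (ringLattice n k).IsSymm :=
  Matrix.IsSymm.ext fun i j => by simp [ringLattice, ringDist_comm]

theorem ringLattice_apply_self (i : Fin n) : ringLattice n k i i = 0 := by
  simp [ringLattice, ringDist_self]

theorem ringLattice_add_right [NeZero n] (i j r : Fin n) :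
    ringLattice n k (i + r) (j + r) = ringLattice n k i j := by
  simp [ringLattice, ringDist_add_right]

theorem sum_ringLattice_row_le [NeZero n] (i : Fin n) : ∑ j, ringLattice n k i j ≤ k := by
  have := card_filter_ringDist_le i (k / 2)
  simp only [ringLattice, Matrix.of_apply, sum_boole]
  exact_mod_cast this.trans (Nat.mul_div_le k 2)

theorem sum_ringLattice_submatrix_mul (f : Fin n → Fin n) {A : Matrix (Fin n) (Fin n) ℝ}
    (hA : A.IsSymm) :
    ∑ i, ∑ j, (ringLattice n k).submatrix f f i j * A i j =
      2 * ∑ e ∈ ((ringLattice n k).submatrix f f).upperSupport, A e.1.1 e.1.2 :=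
  Matrix.sum_mul_eq_two_mul_sum_upperSupport (fun _ _ => ringLattice_apply_eq_zero_or_one _ _)
    (ringLattice_isSymm.submatrix f) (fun _ => ringLattice_apply_self _) hA

theorem two_mul_card_upperSupport_ringLattice_le [NeZero n] (σ : Equiv.Perm (Fin n)) :
    2 * (#((ringLattice n k).submatrix σ σ).upperSupport : ℝ) ≤ n * k := by
  have hones := sum_ringLattice_submatrix_mul (k := k) σ (Matrix.IsSymm.ext fun _ _ => rfl)
    (A := Matrix.of fun _ _ => 1)
  simp only [Matrix.of_apply, mul_one, sum_const, nsmul_one] at hones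
  rw [← hones]
  calc ∑ i, ∑ j, (ringLattice n k).submatrix σ σ i j = ∑ i, ∑ j, ringLattice n k i j := by
        simp only [Matrix.submatrix_apply]
        rw [← Equiv.sum_comp σ fun i => ∑ j, ringLattice n k i j]
        exact sum_congr rfl fun i _ => Equiv.sum_comp σ _
    _ ≤ ∑ _i : Fin n, (k : ℝ) := sum_le_sum fun i _ => sum_ringLattice_row_le i
    _ = n * k := by simp

theorem card_image_submatrix_perm_le [NeZero n] {α : Type*} [DecidableEq α]
    {M : Matrix (Fin n) (Fin n) α} (hM : ∀ i j r, M (i + r) (j + r) = M i j) :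
    #(univ.image fun σ : Equiv.Perm (Fin n) => M.submatrix σ σ) ≤ (n - 1).factorial := by
  have hfiber (σ : Equiv.Perm (Fin n)) :
      n ≤ #{τ : Equiv.Perm (Fin n) | M.submatrix τ τ = M.submatrix σ σ} := by
    have hrot : ∀ r, M.submatrix (σ.trans (Equiv.addRight r)) (σ.trans (Equiv.addRight r)) =
        M.submatrix σ σ := fun r => by ext i j; simp [hM]
    calc n = #(univ : Finset (Fin n)) := by simp
      _ ≤ _ := card_le_card_of_injOn (fun r => σ.trans (Equiv.addRight r))
        (fun r _ => by simpa using hrot r)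
        (fun r₁ _ r₂ _ h => add_left_cancel (DFunLike.congr_fun h (σ.symm 0)))
  have hcard := mul_card_image_le_card univ n (by simpa using fun σ => hfiber σ)
  rw [card_univ, Fintype.card_perm, Fintype.card_fin,
    ← Nat.mul_factorial_pred (NeZero.ne n)] at hcard
  exact Nat.le_of_mul_le_mul_left hcard (Nat.pos_of_neZero n)

end RingLattice

theorem factorial_pred_mul_exp_neg_log_factorial {n : ℕ} (hn : n ≠ 0) :
    ((n - 1).factorial : ℝ) * exp (-log n.factorial) = 1 / n := by
  rw [exp_neg, exp_log (by positivity), ← Nat.mul_factorial_pred hn]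
  push_cast
  field_simp

theorem ofReal_one_sub_le_of_measure_compl_le {Ω : Type*} [MeasurableSpace Ω] {μ : Measure Ω}
    [IsProbabilityMeasure μ] {s : Set Ω} {q : ℝ} (hq : 0 ≤ q) (h : μ sᶜ ≤ ENNReal.ofReal q) :
    ENNReal.ofReal (1 - q) ≤ μ s := by
  rw [ENNReal.ofReal_sub 1 hq, ENNReal.ofReal_one, tsub_le_iff_left]
  calc 1 = μ Set.univ := measure_univ.symm
    _ ≤ μ sᶜ + μ sᶜᶜ := measure_univ_le_add_compl _
    _ ≤ ENNReal.ofReal q + μ s := by rw [compl_compl]; gcongr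

theorem maxlik_statistic_null_bound_general {Ω : Type*} [MeasurableSpace Ω] (μ : Measure Ω)
    [IsProbabilityMeasure μ] (n k : ℕ) (hn : 2 ≤ n) (hk : 0 < k)
    (A : Ω → Matrix (Fin n) (Fin n) ℝ)
    (hmeas : ∀ i j, Measurable fun ω => A ω i j)
    (hsymm : ∀ ω, (A ω).IsSymm)
    (h01 : ∀ ω i j, A ω i j = 0 ∨ A ω i j = 1)
    (hber : ∀ i j : Fin n, i < j →
      μ {ω | A ω i j = 1} = ENNReal.ofReal ((k : ℝ) / (n - 1)))
    (hindep : iIndepFun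
      (fun (e : {q : Fin n × Fin n // q.1 < q.2}) ω => A ω e.1.1 e.1.2) μ) :
    ENNReal.ofReal (1 - 1 / (n : ℝ)) ≤
      μ {ω | ∀ σ : Equiv.Perm (Fin n),
        ∑ i : Fin n, ∑ j : Fin n,
            ((ringLattice n k).submatrix σ.symm σ.symm) i j * A ω i j ≤
          ((k : ℝ) / (n - 1)) * n * k +
            2 * Real.sqrt (((k : ℝ) / (n - 1)) * n * k * Real.log (n.factorial)) +
              (2 / 3) * Real.log (n.factorial)} := by
  have : NeZero n := ⟨by omega⟩
  set p : ℝ := k / (n - 1)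
  set L := log n.factorial
  have hp : 0 < p := div_pos (by exact_mod_cast hk) (sub_pos.2 (by exact_mod_cast hn))
  have hL : 0 ≤ L := log_nonneg (by exact_mod_cast n.factorial_pos)
  have hv : 0 < p * n * k / 2 := by positivity
  have hthreshold : p * n * k + 2 * √(p * n * k * L) + 2 / 3 * L =
      2 * (p * n * k / 2 + √(2 * (p * n * k / 2) * L) + L / 3) := by
    rw [show 2 * (p * n * k / 2) * L = p * n * k * L by ring]
    ring
  set a := p * n * k / 2 + √(2 * (p * n * k / 2) * L) + L / 3
  set T := univ.image fun σ : Equiv.Perm (Fin n) => (ringLattice n k).submatrix σ σ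
  refine ofReal_one_sub_le_of_measure_compl_le (by positivity) <| (measure_mono
    (t := ⋃ M ∈ T, {ω | a ≤ ∑ e ∈ M.upperSupport, A ω e.1.1 e.1.2}) fun ω hω => ?_).trans ?_
  · simp only [Set.mem_compl_iff, Set.mem_ofPred_eq, not_forall, not_le] at hω
    obtain ⟨σ, hσ⟩ := hω
    rw [sum_ringLattice_submatrix_mul _ (hsymm ω), hthreshold] at hσ
    exact Set.mem_biUnion (mem_image_of_mem _ (mem_univ σ.symm))
      (by simp only [Set.mem_ofPred_eq]; linarith)
  calc _ ≤ #T * ENNReal.ofReal (exp (-L)) :=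
        measure_biUnion_sum_ge_le_of_bernoulli
          (X := fun (e : {q : Fin n × Fin n // q.1 < q.2}) ω => A ω e.1.1 e.1.2)
          (fun _ => hmeas _ _) (fun _ ω => h01 ω _ _) hp.le (fun e => hber _ _ e.2) hindep hv hL
          fun _ hM => by
            obtain ⟨σ, -, rfl⟩ := mem_image.1 hM
            nlinarith [two_mul_card_upperSupport_ringLattice_le (k := k) σ]
    _ ≤ (n - 1).factorial * ENNReal.ofReal (exp (-L)) := by
      gcongr
      exact card_image_submatrix_perm_le fun i j r => ringLattice_add_right i j r
    _ = ENNReal.ofReal (1 / n) := by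
      rw [← ENNReal.ofReal_natCast, ← ENNReal.ofReal_mul (by positivity),
        factorial_pred_mul_exp_neg_log_factorial (NeZero.ne n)]

/-- For an Erdős–Rényi random adjacency matrix `A ~ ER(n, k/(n-1))`, with probability at
least `1 - 1/n`, the maximum-likelihood statistic `T₁(A) = max_π ⟨P_π B P_π^T, A⟩`
satisfies `T₁(A) ≤ (k/(n-1))·nk + 2√((k/(n-1))·nk·log n!) + (2/3)·log n!`. -/
theorem maxlik_statistic_null_bound {Ω : Type*} [MeasurableSpace Ω] (μ : Measure Ω)
    [IsProbabilityMeasure μ] (n k : ℕ) (hn : 2 ≤ n) (hk : 0 < k) (hkn : k < n)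
    (hke : Even k) (A : Ω → Matrix (Fin n) (Fin n) ℝ)
    (hmeas : ∀ i j, Measurable fun ω => A ω i j)
    (hsymm : ∀ ω, (A ω).IsSymm) (hdiag : ∀ ω i, A ω i i = 0)
    (h01 : ∀ ω i j, A ω i j = 0 ∨ A ω i j = 1)
    (hber : ∀ i j : Fin n, i < j →
      μ {ω | A ω i j = 1} = ENNReal.ofReal ((k : ℝ) / (n - 1)))
    (hindep : iIndepFun
      (fun (e : {q : Fin n × Fin n // q.1 < q.2}) ω => A ω e.1.1 e.1.2) μ) :
    ENNReal.ofReal (1 - 1 / (n : ℝ)) ≤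
      μ {ω | ∀ σ : Equiv.Perm (Fin n),
        ∑ i : Fin n, ∑ j : Fin n,
            ((ringLattice n k).submatrix σ.symm σ.symm) i j * A ω i j ≤
          ((k : ℝ) / (n - 1)) * n * k +
            2 * Real.sqrt (((k : ℝ) / (n - 1)) * n * k * Real.log (n.factorial)) +
              (2 / 3) * Real.log (n.factorial)} :=
  maxlik_statistic_null_bound_general μ n k hn hk A hmeas hsymm h01 hber hindep
end

section
/- Let p > q > 0, and let t > 0 and reals x, k, n with 1 ≤ x ≤ k and 2k + 2 ≤ n satisfy (k - x + 1)(p - q)² ≥ 2t + (2√2 + 1)(√(k p²) + √(n q²))·√(2t). Then (k-x+1)p² + (2x-2)pq + (n-k-x-1)q² - (√(2(k-x+1)p² t) + √(2(2x-2)pq t) + √(2(n-k-x-1)q² t) + t) > 2k pq + (n - 2k - 2)q² + (√(4k pq t) + √(2(n-2k-2)q² t) + t). -/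
open Real

/-- Deterministic separation inequality underlying the consistency of correlation
thresholding: if `p > q > 0`, `t > 0`, `1 ≤ x ≤ k`, `2k + 2 ≤ n`, and
`(k - x + 1)(p - q)² ≥ 2t + (2√2 + 1)(√(kp²) + √(nq²))·√(2t)`, then the lower confidence
bound for within-neighborhood correlations exceeds the upper confidence bound for
out-of-neighborhood correlations. -/
theorem correlation_thresholding_separation (p q t x k n : ℝ)
    (hq : 0 < q) (hpq : q < p) (ht : 0 < t)
    (hx1 : 1 ≤ x) (hxk : x ≤ k) (hn : 2 * k + 2 ≤ n)
    (hsep : 2 * t + (2 * Real.sqrt 2 + 1) *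
        (Real.sqrt (k * p ^ 2) + Real.sqrt (n * q ^ 2)) * Real.sqrt (2 * t) ≤
      (k - x + 1) * (p - q) ^ 2) :
    2 * k * p * q + (n - 2 * k - 2) * q ^ 2 +
        (Real.sqrt (4 * k * p * q * t) +
          Real.sqrt (2 * (n - 2 * k - 2) * q ^ 2 * t) + t) <
      (k - x + 1) * p ^ 2 + (2 * x - 2) * p * q + (n - k - x - 1) * q ^ 2 -
        (Real.sqrt (2 * (k - x + 1) * p ^ 2 * t) +
          Real.sqrt (2 * (2 * x - 2) * p * q * t) +
          Real.sqrt (2 * (n - k - x - 1) * q ^ 2 * t) + t) := by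
  have hp : 0 < p := lt_trans hq hpq
  have hk1 : (1:ℝ) ≤ k := le_trans hx1 hxk
  have hkn : k ≤ n := by linarith
  set a := Real.sqrt (k * p ^ 2) with ha
  set b := Real.sqrt (n * q ^ 2) with hb
  set s := Real.sqrt (2 * t) with hs
  have hs0 : 0 < s := Real.sqrt_pos.mpr (by linarith)
  have ha0 : 0 < a := Real.sqrt_pos.mpr (by positivity)
  have hb0 : 0 < b := Real.sqrt_pos.mpr (by nlinarith)
  have hsq2nn : (0:ℝ) ≤ Real.sqrt 2 := Real.sqrt_nonneg 2
  -- a*b ≥ k*p*q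
  have hab : k * p * q ≤ a * b := by
    have h1 : a * Real.sqrt (k * q ^ 2) ≤ a * b := by
      apply mul_le_mul_of_nonneg_left _ ha0.le
      apply Real.sqrt_le_sqrt
      nlinarith
    have h2 : a * Real.sqrt (k * q ^ 2) = k * p * q := by
      rw [ha, ← Real.sqrt_mul (by positivity),
        show k * p ^ 2 * (k * q ^ 2) = (k * p * q) ^ 2 by ring]
      exact Real.sqrt_sq (by positivity)
    linarith
  -- sqrt(2*k*p*q) ≤ √2 * (a+b)/2
  have hmid : Real.sqrt (2 * (k * p * q)) ≤ Real.sqrt 2 * ((a + b) / 2) := by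
    have h1 : Real.sqrt (2 * (k * p * q)) ≤ Real.sqrt (2 * (a * b)) :=
      Real.sqrt_le_sqrt (by linarith)
    have h2 : Real.sqrt (2 * (a * b)) = Real.sqrt 2 * Real.sqrt (a * b) :=
      Real.sqrt_mul (by norm_num) _
    have h3 : Real.sqrt (a * b) ≤ (a + b) / 2 := by
      have := Real.sqrt_le_sqrt (show a * b ≤ ((a + b) / 2) ^ 2 by nlinarith [sq_nonneg (a - b)])
      rwa [Real.sqrt_sq (by positivity)] at this
    have h4 := mul_le_mul_of_nonneg_left h3 hsq2nn
    linarith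
  have hkx : (0:ℝ) ≤ k - x + 1 := by linarith
  have hnk : (0:ℝ) ≤ n - 2 * k - 2 := by linarith
  -- S1
  have h1 : Real.sqrt (2 * (k - x + 1) * p ^ 2 * t) ≤ a * s := by
    rw [show 2 * (k - x + 1) * p ^ 2 * t = ((k - x + 1) * p ^ 2) * (2 * t) by ring,
      Real.sqrt_mul (by positivity), ha, hs]
    exact mul_le_mul_of_nonneg_right (Real.sqrt_le_sqrt
      (mul_le_mul_of_nonneg_right (by linarith) (sq_nonneg p))) (Real.sqrt_nonneg _)
  -- S2
  have h2 : Real.sqrt (2 * (2 * x - 2) * p * q * t) ≤ Real.sqrt 2 * ((a + b) / 2) * s := by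
    have hstep : Real.sqrt (2 * (2 * x - 2) * p * q * t) ≤ Real.sqrt (2 * (k * p * q)) * s := by
      rw [show 2 * (2 * x - 2) * p * q * t = ((2 * x - 2) * (p * q)) * (2 * t) by ring,
        Real.sqrt_mul (mul_nonneg (by linarith) (mul_pos hp hq).le), hs]
      refine mul_le_mul_of_nonneg_right (Real.sqrt_le_sqrt ?_) (Real.sqrt_nonneg _)
      have := mul_le_mul_of_nonneg_right (show 2 * x - 2 ≤ 2 * k by linarith)
        (mul_pos hp hq).le
      linarith
    exact hstep.trans (mul_le_mul_of_nonneg_right hmid hs0.le)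
  -- S3
  have h3 : Real.sqrt (2 * (n - k - x - 1) * q ^ 2 * t) ≤ b * s := by
    rw [show 2 * (n - k - x - 1) * q ^ 2 * t = ((n - k - x - 1) * q ^ 2) * (2 * t) by ring,
      Real.sqrt_mul (mul_nonneg (by linarith) (sq_nonneg q)), hb, hs]
    exact mul_le_mul_of_nonneg_right (Real.sqrt_le_sqrt
      (mul_le_mul_of_nonneg_right (by linarith) (sq_nonneg q))) (Real.sqrt_nonneg _)
  -- S4
  have h4 : Real.sqrt (4 * k * p * q * t) ≤ Real.sqrt 2 * ((a + b) / 2) * s := by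
    have hstep : Real.sqrt (4 * k * p * q * t) = Real.sqrt (2 * (k * p * q)) * s := by
      rw [show 4 * k * p * q * t = (2 * (k * p * q)) * (2 * t) by ring,
        Real.sqrt_mul (by positivity), hs]
    rw [hstep]
    exact mul_le_mul_of_nonneg_right hmid hs0.le
  -- S5
  have h5 : Real.sqrt (2 * (n - 2 * k - 2) * q ^ 2 * t) ≤ b * s := by
    rw [show 2 * (n - 2 * k - 2) * q ^ 2 * t = ((n - 2 * k - 2) * q ^ 2) * (2 * t) by ring,
      Real.sqrt_mul (by positivity), hb, hs]
    exact mul_le_mul_of_nonneg_right (Real.sqrt_le_sqrt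
      (mul_le_mul_of_nonneg_right (by linarith) (sq_nonneg q))) (Real.sqrt_nonneg _)
  have hsq2 : (1:ℝ) < Real.sqrt 2 := by
    have : Real.sqrt 1 < Real.sqrt 2 := Real.sqrt_lt_sqrt (by norm_num) (by norm_num)
    simpa using this
  have hA : 0 < Real.sqrt 2 * a * s := by positivity
  have hB : 0 < (Real.sqrt 2 - 1) * (b * s) :=
    mul_pos (by linarith) (mul_pos hb0 hs0)
  -- strict bound on the sum
  have hsum : a * s + Real.sqrt 2 * ((a + b) / 2) * s + b * s
      + Real.sqrt 2 * ((a + b) / 2) * s + b * s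
      < (2 * Real.sqrt 2 + 1) * (a + b) * s := by nlinarith [hA, hB]
  linarith [h1, h2, h3, h4, h5, hsum, hsep]
end
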